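/- arXiv:1805.09737 — 2 statements merged into one kernel-verified Lean document; each statement's English description precedes it below -/
import Mathlib

section
/- Let n ≥ 2 and let A, B be n×n real symmetric matrices. Suppose B is indefinite (B has at least one positive and at least one negative eigenvalue) and both the largest and the smallest eigenvalues of B have multiplicity 1 (one-dimensional eigenspaces). Then there exists μ₀ > 0 such that for all μ ≥ μ₀ the pair (A + μ·I, B) satisfies the weak interlacing property: inf E(A+μI, B) ≤ inf O(A+μI, B) and sup E(A+μI, B) ≥ sup O(A+μI, B). -/
open Matrix

noncomputable def frobNorm {n : ℕ} (M : Matrix (Fin n) (Fin n) ℝ) : ℝ :=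
  Real.sqrt (Mᵀ * M).trace

def Eset {n : ℕ} (A B : Matrix (Fin n) (Fin n) ℝ) : Set ℝ :=
  {t | ∃ U : Matrix (Fin n) (Fin n) ℝ, Uᵀ = U ∧ frobNorm U = 1 ∧ t = (A * U * B * U).trace}

def Oset {n : ℕ} (A B : Matrix (Fin n) (Fin n) ℝ) : Set ℝ :=
  {t | ∃ W : Matrix (Fin n) (Fin n) ℝ, Wᵀ = -W ∧ frobNorm W = 1 ∧ t = (A * W * B * Wᵀ).trace}

/-!
Let `v` be a unit eigenvector of the simple smallest eigenvalue `l₁` of `B`, and `l₂ > l₁` the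
next eigenvalue. The symmetric matrix `U = v vᵀ` gives `trace ((A + μ) U B U) = l₁ (vᵀ A v + μ)`,
of slope `l₁` in `μ`. For a skew-symmetric `W` of Frobenius norm one, `‖W v‖² ≤ 1/2`, so summing
the bound `wᵀ B w ≥ l₂ ‖w‖² - (l₂ - l₁) (v ⬝ w)²` over the rows `w` of `W` gives
`trace (W B Wᵀ) ≥ (l₁ + l₂) / 2`, while `trace (A W B Wᵀ)` is bounded. Hence every element of
`O (A + μ, B)` grows with slope at least `(l₁ + l₂) / 2 > l₁`, and `inf E ≤ inf O` for large `μ`.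
The inequality between the suprema is the same statement for `-B`, whose smallest eigenvalue is
minus the largest one of `B`.
-/

open Finset Filter

lemma exists_gap_of_card_filter_eq_iInf {ι α : Type*} [Fintype ι] [Nontrivial ι]
    [ConditionallyCompleteLinearOrder α] (f : ι → α)
    (h : (univ.filter fun i => f i = ⨅ j, f j).card = 1) :
    ∃ i₀ m, f i₀ < m ∧ ∀ i ≠ i₀, m ≤ f i := by
  classical
  obtain ⟨i₀, hi₀⟩ := exists_eq_ciInf_of_finite (f := f)
  have hlt : ∀ i ≠ i₀, f i₀ < f i := fun i hi => by
    refine hi₀ ▸ (ciInf_le (Finite.bddBelow_range f) i).lt_of_ne fun hi' => hi ?_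
    exact card_le_one.mp h.le i (by simp [hi']) i₀ (by simp [hi₀])
  have hne : (univ.erase i₀).Nonempty := by
    obtain ⟨i, hi⟩ := exists_ne i₀
    exact ⟨i, mem_erase.mpr ⟨hi, mem_univ i⟩⟩
  refine ⟨i₀, (univ.erase i₀).inf' hne f, ?_,
    fun i hi => inf'_le f (mem_erase.mpr ⟨hi, mem_univ i⟩)⟩
  obtain ⟨i, hi, hfi⟩ := exists_mem_eq_inf' hne f
  exact hfi ▸ hlt i (ne_of_mem_erase hi)

namespace Matrix.IsHermitian
variable {ι : Type*} [Fintype ι] [DecidableEq ι] {B : Matrix ι ι ℝ} (hB : B.IsHermitian)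

lemma sum_eigenvectorBasis_dotProduct_mul (x y : ι → ℝ) :
    ∑ i, (⇑(hB.eigenvectorBasis i) ⬝ᵥ x) * (⇑(hB.eigenvectorBasis i) ⬝ᵥ y) = x ⬝ᵥ y := by
  simpa [EuclideanSpace.inner_eq_star_dotProduct, dotProduct_comm] using
    hB.eigenvectorBasis.sum_inner_mul_inner (WithLp.toLp 2 x) (WithLp.toLp 2 y)

lemma eigenvectorBasis_dotProduct_mulVec (i : ι) (x : ι → ℝ) :
    ⇑(hB.eigenvectorBasis i) ⬝ᵥ B *ᵥ x = hB.eigenvalues i * (⇑(hB.eigenvectorBasis i) ⬝ᵥ x) := by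
  have hBt : Bᵀ = B := by simpa [conjTranspose_eq_transpose_of_trivial] using hB.eq
  rw [dotProduct_mulVec, ← mulVec_transpose, hBt, hB.mulVec_eigenvectorBasis, smul_dotProduct,
    smul_eq_mul]

lemma eigenvectorBasis_dotProduct_self (i : ι) :
    ⇑(hB.eigenvectorBasis i) ⬝ᵥ ⇑(hB.eigenvectorBasis i) = 1 := by
  have h := hB.eigenvectorBasis.inner_eq_one i
  rwa [EuclideanSpace.inner_eq_star_dotProduct, star_trivial] at h

lemma eigenvectorBasis_dotProduct_mulVec_self (i : ι) :
    ⇑(hB.eigenvectorBasis i) ⬝ᵥ B *ᵥ ⇑(hB.eigenvectorBasis i) = hB.eigenvalues i := by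
  rw [eigenvectorBasis_dotProduct_mulVec, eigenvectorBasis_dotProduct_self, mul_one]

lemma dotProduct_mulVec_sub_eq_sum_erase (i₀ : ι) (m : ℝ) (x : ι → ℝ) :
    x ⬝ᵥ B *ᵥ x - m * (x ⬝ᵥ x)
        - (hB.eigenvalues i₀ - m) * (⇑(hB.eigenvectorBasis i₀) ⬝ᵥ x) ^ 2
      = ∑ i ∈ univ.erase i₀, (hB.eigenvalues i - m) * (⇑(hB.eigenvectorBasis i) ⬝ᵥ x) ^ 2 := by
  have hsum : ∑ i, (hB.eigenvalues i - m) * (⇑(hB.eigenvectorBasis i) ⬝ᵥ x) ^ 2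
      = x ⬝ᵥ B *ᵥ x - m * (x ⬝ᵥ x) := by
    rw [← hB.sum_eigenvectorBasis_dotProduct_mul, ← hB.sum_eigenvectorBasis_dotProduct_mul,
      mul_sum, ← sum_sub_distrib]
    simp only [eigenvectorBasis_dotProduct_mulVec]
    exact sum_congr rfl fun i _ => by ring
  rw [← add_sum_erase _ _ (mem_univ i₀)] at hsum
  linarith

lemma le_dotProduct_mulVec_of_forall_ne_le {i₀ : ι} {m : ℝ}
    (hm : ∀ i ≠ i₀, m ≤ hB.eigenvalues i) (x : ι → ℝ) :
    m * (x ⬝ᵥ x) + (hB.eigenvalues i₀ - m) * (⇑(hB.eigenvectorBasis i₀) ⬝ᵥ x) ^ 2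
      ≤ x ⬝ᵥ B *ᵥ x := by
  have h := hB.dotProduct_mulVec_sub_eq_sum_erase i₀ m x
  have hrest : 0 ≤ ∑ i ∈ univ.erase i₀,
      (hB.eigenvalues i - m) * (⇑(hB.eigenvectorBasis i) ⬝ᵥ x) ^ 2 :=
    sum_nonneg fun i hi => mul_nonneg (sub_nonneg.mpr (hm i (ne_of_mem_erase hi))) (sq_nonneg _)
  linarith

lemma dotProduct_mulVec_le_of_forall_ne_le {i₀ : ι} {m : ℝ}
    (hm : ∀ i ≠ i₀, hB.eigenvalues i ≤ m) (x : ι → ℝ) :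
    x ⬝ᵥ B *ᵥ x
      ≤ m * (x ⬝ᵥ x) + (hB.eigenvalues i₀ - m) * (⇑(hB.eigenvectorBasis i₀) ⬝ᵥ x) ^ 2 := by
  have h := hB.dotProduct_mulVec_sub_eq_sum_erase i₀ m x
  have hrest : ∑ i ∈ univ.erase i₀,
      (hB.eigenvalues i - m) * (⇑(hB.eigenvectorBasis i) ⬝ᵥ x) ^ 2 ≤ 0 :=
    sum_nonpos fun i hi =>
      mul_nonpos_of_nonpos_of_nonneg (sub_nonpos.mpr (hm i (ne_of_mem_erase hi))) (sq_nonneg _)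
  linarith

end Matrix.IsHermitian

section
variable {ι : Type*} [Fintype ι]

lemma trace_transpose_mul_self (M : Matrix ι ι ℝ) : (Mᵀ * M).trace = ∑ i, M i ⬝ᵥ M i := by
  simp only [trace, Matrix.diag, mul_apply, transpose_apply, dotProduct]
  exact sum_comm

lemma trace_mul_mul_transpose (W B : Matrix ι ι ℝ) :
    (W * B * Wᵀ).trace = ∑ i, W i ⬝ᵥ B *ᵥ W i := by
  simp only [trace, Matrix.diag, mul_mul_apply, transpose_transpose]

lemma abs_apply_le_one {M : Matrix ι ι ℝ} (hM : (Mᵀ * M).trace = 1) (i j : ι) : |M i j| ≤ 1 := by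
  rw [trace_transpose_mul_self] at hM
  have hrow : M i j * M i j ≤ M i ⬝ᵥ M i :=
    single_le_sum (f := fun j' => M i j' * M i j') (fun _ _ => mul_self_nonneg _) (mem_univ j)
  have hall : M i ⬝ᵥ M i ≤ ∑ i', M i' ⬝ᵥ M i' :=
    single_le_sum (fun i' _ => dotProduct_self_star_nonneg (M i')) (mem_univ i)
  exact abs_le_one_iff_mul_self_le_one.mpr (by linarith)

lemma abs_mul_mul_apply_le {U V : Matrix ι ι ℝ} (hU : ∀ i j, |U i j| ≤ 1)
    (hV : ∀ i j, |V i j| ≤ 1) (B : Matrix ι ι ℝ) (i j : ι) :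
    |(U * B * V) i j| ≤ ∑ k, ∑ l, |B k l| := by
  simp only [mul_apply, sum_mul]
  rw [sum_comm]
  refine (abs_sum_le_sum_abs _ _).trans (sum_le_sum fun k _ => ?_)
  refine (abs_sum_le_sum_abs _ _).trans (sum_le_sum fun l _ => ?_)
  rw [abs_mul, abs_mul]
  calc |U i k| * |B k l| * |V l j| ≤ 1 * |B k l| * 1 := by gcongr <;> simp [hU, hV]
    _ = |B k l| := by ring

lemma abs_trace_mul_mul_mul_le (A B : Matrix ι ι ℝ) {U V : Matrix ι ι ℝ}
    (hU : ∀ i j, |U i j| ≤ 1) (hV : ∀ i j, |V i j| ≤ 1) :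
    |(A * U * B * V).trace| ≤ (∑ i, ∑ j, |A i j|) * ∑ i, ∑ j, |B i j| := by
  rw [Matrix.mul_assoc, Matrix.mul_assoc, ← Matrix.mul_assoc U, trace, sum_mul]
  refine (abs_sum_le_sum_abs _ _).trans (sum_le_sum fun i _ => ?_)
  rw [Matrix.diag_apply, mul_apply, sum_mul]
  refine (abs_sum_le_sum_abs _ _).trans (sum_le_sum fun j _ => ?_)
  rw [abs_mul]
  exact mul_le_mul_of_nonneg_left (abs_mul_mul_apply_le hU hV B j i) (abs_nonneg _)

lemma dotProduct_mulVec_self_eq_zero {W : Matrix ι ι ℝ} (hW : Wᵀ = -W) (v : ι → ℝ) :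
    v ⬝ᵥ W *ᵥ v = 0 := by
  have h : v ⬝ᵥ W *ᵥ v = -(v ⬝ᵥ W *ᵥ v) :=
    calc v ⬝ᵥ W *ᵥ v = Wᵀ *ᵥ v ⬝ᵥ v := by rw [mulVec_transpose, dotProduct_mulVec]
      _ = -(v ⬝ᵥ W *ᵥ v) := by rw [hW, neg_mulVec, neg_dotProduct, dotProduct_comm]
  linarith

lemma two_mul_mulVec_dotProduct_le {W : Matrix ι ι ℝ} (hW : Wᵀ = -W) {v : ι → ℝ}
    (hv : v ⬝ᵥ v = 1) : 2 * (W *ᵥ v ⬝ᵥ W *ᵥ v) ≤ (Wᵀ * W).trace := by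
  set u := W *ᵥ v
  have hu : ∀ i, ∑ j, W i j * v j = u i := fun i => rfl
  have hut : ∀ j, ∑ i, W i j * v i = -u j := fun j => by
    rw [← hu]
    simpa [mulVec, dotProduct] using congrFun (congrArg (· *ᵥ v) hW) j
  have huv : u ⬝ᵥ v = 0 := by rw [dotProduct_comm]; exact dotProduct_mulVec_self_eq_zero hW v
  have hpt : ∀ i j, (W i j - u i * v j + v i * u j) ^ 2
      = W i j * W i j - 2 * (u i * (W i j * v j)) + 2 * (u j * (W i j * v i))
        + u i * u i * (v j * v j) + u j * u j * (v i * v i) - 2 * ((u i * v i) * (u j * v j)) := by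
    intros; ring
  -- `‖W - u vᵀ + v uᵀ‖² = ‖W‖² - 2 ‖u‖²` for `u = W v`
  have key : 0 ≤ ∑ i, ∑ j, (W i j - u i * v j + v i * u j) ^ 2 := by positivity
  simp only [hpt, sum_add_distrib, sum_sub_distrib, ← mul_sum, ← sum_mul, hu] at key
  rw [sum_comm (f := fun i j => u j * (W i j * v i))] at key
  simp only [← mul_sum, hut, mul_neg, sum_neg_distrib] at key
  rw [trace_transpose_mul_self]
  simp only [dotProduct] at hv huv ⊢
  simp only [hv, huv] at key
  linarith

lemma add_div_two_le_trace_mul_mul_transpose {B : Matrix ι ι ℝ} {v : ι → ℝ} (hv : v ⬝ᵥ v = 1)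
    {l₁ l₂ : ℝ} (hl : l₁ ≤ l₂)
    (hq : ∀ x, l₂ * (x ⬝ᵥ x) + (l₁ - l₂) * (v ⬝ᵥ x) ^ 2 ≤ x ⬝ᵥ B *ᵥ x)
    {W : Matrix ι ι ℝ} (hW : Wᵀ = -W) (hW1 : (Wᵀ * W).trace = 1) :
    (l₁ + l₂) / 2 ≤ (W * B * Wᵀ).trace := by
  have hWv : W *ᵥ v ⬝ᵥ W *ᵥ v = ∑ i, (v ⬝ᵥ W i) ^ 2 := by
    simp only [dotProduct_comm v, sq]; rfl
  have hs := two_mul_mulVec_dotProduct_le hW hv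
  rw [hW1, hWv] at hs
  rw [trace_transpose_mul_self] at hW1
  calc (l₁ + l₂) / 2 = l₂ * 1 + (l₁ - l₂) * (1 / 2) := by ring
    _ ≤ l₂ * 1 + (l₁ - l₂) * ∑ i, (v ⬝ᵥ W i) ^ 2 := by
        have := mul_le_mul_of_nonpos_left (show ∑ i, (v ⬝ᵥ W i) ^ 2 ≤ 1 / 2 by linarith)
          (sub_nonpos.mpr hl)
        linarith
    _ = ∑ i, (l₂ * (W i ⬝ᵥ W i) + (l₁ - l₂) * (v ⬝ᵥ W i) ^ 2) := by
        rw [sum_add_distrib, ← mul_sum, ← mul_sum, hW1]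
    _ ≤ ∑ i, W i ⬝ᵥ B *ᵥ W i := sum_le_sum fun i _ => hq (W i)
    _ = (W * B * Wᵀ).trace := (trace_mul_mul_transpose W B).symm

end

section
variable {n : ℕ}

lemma frobNorm_eq_one_iff (M : Matrix (Fin n) (Fin n) ℝ) : frobNorm M = 1 ↔ (Mᵀ * M).trace = 1 :=
  Real.sqrt_eq_one

lemma mem_Eset_of_dotProduct_self_eq_one (A B : Matrix (Fin n) (Fin n) ℝ)
    {v : Fin n → ℝ} (hv : v ⬝ᵥ v = 1) : (v ⬝ᵥ B *ᵥ v) * (v ⬝ᵥ A *ᵥ v) ∈ Eset A B := by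
  refine ⟨vecMulVec v v, transpose_vecMulVec v v, ?_, ?_⟩
  · rw [frobNorm_eq_one_iff, transpose_vecMulVec, vecMulVec_mul_vecMulVec, hv, one_smul,
      trace_vecMulVec, hv]
  · rw [mul_vecMulVec A, vecMulVec_mul, vecMulVec_mul_vecMulVec, trace_vecMulVec, dotProduct_smul,
      smul_eq_mul, ← dotProduct_mulVec, dotProduct_comm (A *ᵥ v)]

lemma Eset_bddBelow (A B : Matrix (Fin n) (Fin n) ℝ) : BddBelow (Eset A B) := by
  refine ⟨-((∑ i, ∑ j, |A i j|) * ∑ i, ∑ j, |B i j|), ?_⟩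
  rintro _ ⟨U, -, hU, rfl⟩
  have hU1 := abs_apply_le_one ((frobNorm_eq_one_iff U).mp hU)
  exact neg_le_of_abs_le (abs_trace_mul_mul_mul_le A B hU1 hU1)

lemma Oset_nonempty_of_ne_zero (A B : Matrix (Fin n) (Fin n) ℝ) {W₀ : Matrix (Fin n) (Fin n) ℝ}
    (hW₀ : W₀ᵀ = -W₀) (hne : W₀ ≠ 0) : (Oset A B).Nonempty := by
  have ht : 0 < (W₀ᵀ * W₀).trace := by
    refine lt_of_le_of_ne ?_ fun h => hne ?_
    · rw [trace_transpose_mul_self]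
      exact sum_nonneg fun i _ => dotProduct_self_star_nonneg (W₀ i)
    · exact trace_conjTranspose_mul_self_eq_zero_iff.mp h.symm
  refine ⟨_, (√(W₀ᵀ * W₀).trace)⁻¹ • W₀, by simp [hW₀], ?_, rfl⟩
  rw [frobNorm_eq_one_iff]
  simp only [transpose_smul, smul_mul, Matrix.mul_smul, trace_smul, smul_eq_mul]
  rw [← mul_assoc, ← mul_inv, Real.mul_self_sqrt ht.le, inv_mul_cancel₀ ht.ne']

lemma Oset_nonempty (hn : 2 ≤ n) (A B : Matrix (Fin n) (Fin n) ℝ) : (Oset A B).Nonempty := by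
  have : Nontrivial (Fin n) := Fin.nontrivial_iff_two_le.mpr hn
  obtain ⟨i, j, hij⟩ := exists_pair_ne (Fin n)
  refine Oset_nonempty_of_ne_zero A B (W₀ := single i j 1 - single j i 1) (by simp [transpose_sub])
    fun h => ?_
  simpa [hij] using congrFun (congrFun h i) j

lemma Eset_neg (A B : Matrix (Fin n) (Fin n) ℝ) : Eset A (-B) = -Eset A B := by
  ext t
  simp [Eset, neg_eq_iff_eq_neg]

lemma Oset_neg (A B : Matrix (Fin n) (Fin n) ℝ) : Oset A (-B) = -Oset A B := by
  ext t
  simp [Oset, neg_eq_iff_eq_neg]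

lemma le_of_mem_Oset_add_smul_one (A : Matrix (Fin n) (Fin n) ℝ) {B : Matrix (Fin n) (Fin n) ℝ}
    {v : Fin n → ℝ} (hv : v ⬝ᵥ v = 1) {l₁ l₂ : ℝ} (hl : l₁ ≤ l₂)
    (hq : ∀ x, l₂ * (x ⬝ᵥ x) + (l₁ - l₂) * (v ⬝ᵥ x) ^ 2 ≤ x ⬝ᵥ B *ᵥ x) {μ : ℝ} (hμ : 0 ≤ μ)
    {t : ℝ} (ht : t ∈ Oset (A + μ • 1) B) :
    -((∑ i, ∑ j, |A i j|) * ∑ i, ∑ j, |B i j|) + μ * ((l₁ + l₂) / 2) ≤ t := by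
  obtain ⟨W, hW, hW1, rfl⟩ := ht
  rw [frobNorm_eq_one_iff] at hW1
  have hWT : ∀ i j, |Wᵀ i j| ≤ 1 := fun i j => abs_apply_le_one hW1 j i
  have hA := neg_le_of_abs_le (abs_trace_mul_mul_mul_le A B (abs_apply_le_one hW1) hWT)
  have hB := mul_le_mul_of_nonneg_left (add_div_two_le_trace_mul_mul_transpose hv hl hq hW hW1) hμ
  simp only [add_mul, smul_mul, Matrix.one_mul, trace_add, trace_smul, smul_eq_mul]
  linarith

theorem eventually_sInf_Eset_add_smul_one_le_sInf_Oset (hn : 2 ≤ n)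
    (A : Matrix (Fin n) (Fin n) ℝ) {B : Matrix (Fin n) (Fin n) ℝ} {v : Fin n → ℝ}
    (hv : v ⬝ᵥ v = 1) {l₁ l₂ : ℝ} (hl : l₁ < l₂) (hvB : v ⬝ᵥ B *ᵥ v = l₁)
    (hq : ∀ x, l₂ * (x ⬝ᵥ x) + (l₁ - l₂) * (v ⬝ᵥ x) ^ 2 ≤ x ⬝ᵥ B *ᵥ x) :
    ∀ᶠ μ : ℝ in atTop, sInf (Eset (A + μ • 1) B) ≤ sInf (Oset (A + μ • 1) B) := by
  set C := (∑ i, ∑ j, |A i j|) * ∑ i, ∑ j, |B i j|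
  set q := v ⬝ᵥ A *ᵥ v
  filter_upwards [eventually_ge_atTop (0 : ℝ), eventually_ge_atTop (2 * (C + l₁ * q) / (l₂ - l₁))]
    with μ hμ hμC
  have hE : v ⬝ᵥ (A + μ • 1) *ᵥ v = q + μ := by
    rw [add_mulVec, smul_mulVec, one_mulVec, dotProduct_add, dotProduct_smul, hv, smul_eq_mul,
      mul_one]
  have hmem := mem_Eset_of_dotProduct_self_eq_one (A + μ • 1) B hv
  rw [hvB, hE] at hmem
  have hμC' := (div_le_iff₀ (sub_pos.mpr hl)).mp hμC
  calc sInf (Eset (A + μ • 1) B) ≤ l₁ * (q + μ) := csInf_le (Eset_bddBelow _ _) hmem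
    _ ≤ -C + μ * ((l₁ + l₂) / 2) := by linarith
    _ ≤ sInf (Oset (A + μ • 1) B) :=
      le_csInf (Oset_nonempty hn _ _) fun t ht => le_of_mem_Oset_add_smul_one A hv hl.le hq hμ ht

end

theorem stmt_11_general (n : ℕ) (hn : 2 ≤ n) (A B : Matrix (Fin n) (Fin n) ℝ)
    (hB : B.IsHermitian)
    (hmax : (Finset.univ.filter
        (fun i => hB.eigenvalues i = ⨆ j, hB.eigenvalues j)).card = 1)
    (hmin : (Finset.univ.filter
        (fun i => hB.eigenvalues i = ⨅ j, hB.eigenvalues j)).card = 1) :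
    ∃ μ₀ : ℝ, 0 < μ₀ ∧ ∀ μ : ℝ, μ₀ ≤ μ →
      sInf (Eset (A + μ • (1 : Matrix (Fin n) (Fin n) ℝ)) B)
          ≤ sInf (Oset (A + μ • (1 : Matrix (Fin n) (Fin n) ℝ)) B) ∧
        sSup (Oset (A + μ • (1 : Matrix (Fin n) (Fin n) ℝ)) B)
          ≤ sSup (Eset (A + μ • (1 : Matrix (Fin n) (Fin n) ℝ)) B) := by
  have : Nontrivial (Fin n) := Fin.nontrivial_iff_two_le.mpr hn
  obtain ⟨i₁, l, hl, hlle⟩ := exists_gap_of_card_filter_eq_iInf hB.eigenvalues hmin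
  obtain ⟨i₂, m, hm, hmge⟩ : ∃ i₂ m, m < hB.eigenvalues i₂ ∧ ∀ i ≠ i₂, hB.eigenvalues i ≤ m :=
    exists_gap_of_card_filter_eq_iInf (α := ℝᵒᵈ) hB.eigenvalues hmax
  have hinf := eventually_sInf_Eset_add_smul_one_le_sInf_Oset hn A
    (hB.eigenvectorBasis_dotProduct_self i₁) hl (hB.eigenvectorBasis_dotProduct_mulVec_self i₁)
    (hB.le_dotProduct_mulVec_of_forall_ne_le hlle)
  have hsup := eventually_sInf_Eset_add_smul_one_le_sInf_Oset hn A (B := -B)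
    (hB.eigenvectorBasis_dotProduct_self i₂) (neg_lt_neg hm)
    (by rw [neg_mulVec, dotProduct_neg, hB.eigenvectorBasis_dotProduct_mulVec_self]) fun x => by
      have := hB.dotProduct_mulVec_le_of_forall_ne_le hmge x
      rw [neg_mulVec, dotProduct_neg]
      linarith
  obtain ⟨μ₀, hμ₀⟩ := eventually_atTop.mp (hinf.and hsup)
  refine ⟨max μ₀ 1, by positivity, fun μ hμ => ?_⟩
  obtain ⟨hE, hO⟩ := hμ₀ μ (le_of_max_le_left hμ)
  rw [Eset_neg, Oset_neg, Real.sInf_neg, Real.sInf_neg, neg_le_neg_iff] at hO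
  exact ⟨hE, hO⟩

theorem stmt_11 (n : ℕ) (hn : 2 ≤ n) (A B : Matrix (Fin n) (Fin n) ℝ)
    (hA : Aᵀ = A) (hB : B.IsHermitian)
    (hpos : ∃ i, 0 < hB.eigenvalues i) (hneg : ∃ i, hB.eigenvalues i < 0)
    (hmax : (Finset.univ.filter
        (fun i => hB.eigenvalues i = ⨆ j, hB.eigenvalues j)).card = 1)
    (hmin : (Finset.univ.filter
        (fun i => hB.eigenvalues i = ⨅ j, hB.eigenvalues j)).card = 1) :
    ∃ μ₀ : ℝ, 0 < μ₀ ∧ ∀ μ : ℝ, μ₀ ≤ μ →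
      sInf (Eset (A + μ • (1 : Matrix (Fin n) (Fin n) ℝ)) B)
          ≤ sInf (Oset (A + μ • (1 : Matrix (Fin n) (Fin n) ℝ)) B) ∧
        sSup (Oset (A + μ • (1 : Matrix (Fin n) (Fin n) ℝ)) B)
          ≤ sSup (Eset (A + μ • (1 : Matrix (Fin n) (Fin n) ℝ)) B) :=
  stmt_11_general n hn A B hB hmax hmin
end

section
/- Let n ≥ 2 and let Ā, B̄ be n×n real symmetric matrices such that inf O(Ā,B̄) < inf E(Ā,B̄) (so the weak interlacing property fails for (Ā,B̄)). Then for every n×n real symmetric matrix A there exists μ₀ > 0 such that for all μ ≥ μ₀ one has inf O(A + μ·Ā, B̄) < inf E(A + μ·Ā, B̄); i.e., the weak interlacing property fails for (A + μ·Ā, B̄). -/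
/-!
Write `C = n ‖A‖_F ‖B̄‖_F`. Every trace `tr(A U B̄ V)` with `‖U‖_F, ‖V‖_F ≤ 1` has absolute
value at most `C`, so adding this term to the minimised function moves its infimum by at most
`C`. Hence `inf E(A + μ Ā, B̄) ≥ μ inf E(Ā, B̄) - C` and `inf O(A + μ Ā, B̄) ≤ μ inf O(Ā, B̄) + C`,
and the gap `μ (inf E(Ā, B̄) - inf O(Ā, B̄))` exceeds `2C` once `μ` is large.
-/

open Matrix

theorem abs_iInf_add_mul_sub_mul_iInf_le {ι : Type*} [Nonempty ι] {f g : ι → ℝ} {C μ : ℝ}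
    (hf : ∀ i, |f i| ≤ C) (hg : BddBelow (Set.range g)) (hμ : 0 ≤ μ) :
    |(⨅ i, f i + μ * g i) - μ * ⨅ i, g i| ≤ C := by
  obtain ⟨m, hm⟩ := hg
  have hbdd : BddBelow (Set.range fun i => f i + μ * g i) :=
    ⟨-C + μ * m, by rintro _ ⟨i, rfl⟩; nlinarith [(abs_le.mp (hf i)).1, hm ⟨i, rfl⟩]⟩
  rw [abs_le]
  constructor
  · have : μ * (⨅ i, g i) - C ≤ ⨅ i, f i + μ * g i := le_ciInf fun i => by
      nlinarith [(abs_le.mp (hf i)).1, ciInf_le ⟨m, hm⟩ i]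
    linarith
  · have : (⨅ i, f i + μ * g i) - C ≤ ⨅ i, μ * g i := le_ciInf fun i => by
      linarith [(abs_le.mp (hf i)).2, ciInf_le hbdd i]
    rw [Real.mul_iInf_of_nonneg hμ]
    linarith

section Frobenius

attribute [local instance] frobeniusSeminormedAddCommGroup frobeniusNormedAddCommGroup
  frobeniusNormedSpace

theorem Matrix.frobenius_norm_apply_le {m n α : Type*} [Fintype m] [Fintype n]
    [SeminormedAddCommGroup α] (M : Matrix m n α) (i : m) (j : n) : ‖M i j‖ ≤ ‖M‖ :=
  (PiLp.norm_apply_le (WithLp.toLp 2 fun j => M i j) j).trans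
    (PiLp.norm_apply_le (WithLp.toLp 2 fun i => WithLp.toLp 2 fun j => M i j) i)

theorem Matrix.frobenius_norm_trace_le {m α : Type*} [Fintype m] [SeminormedAddCommGroup α]
    (M : Matrix m m α) : ‖M.trace‖ ≤ Fintype.card m * ‖M‖ :=
  calc ‖M.trace‖ ≤ ∑ i, ‖M i i‖ := norm_sum_le _ _
    _ ≤ ∑ _i : m, ‖M‖ := Finset.sum_le_sum fun i _ => M.frobenius_norm_apply_le i i
    _ = Fintype.card m * ‖M‖ := by simp

theorem Matrix.frobenius_norm_trace_mul_mul_mul_le {m 𝕜 : Type*} [Fintype m] [RCLike 𝕜]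
    (A U B V : Matrix m m 𝕜) (hU : ‖U‖ ≤ 1) (hV : ‖V‖ ≤ 1) :
    ‖(A * U * B * V).trace‖ ≤ Fintype.card m * (‖A‖ * ‖B‖) := by
  have hprod : ‖A * U * B * V‖ ≤ ‖A‖ * ‖B‖ :=
    calc ‖A * U * B * V‖ ≤ ‖A‖ * ‖U‖ * ‖B‖ * ‖V‖ := by
          grw [frobenius_norm_mul, frobenius_norm_mul, frobenius_norm_mul]
      _ ≤ ‖A‖ * 1 * ‖B‖ * 1 := by gcongr
      _ = ‖A‖ * ‖B‖ := by ring
  exact (frobenius_norm_trace_le _).trans (by gcongr)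

theorem frobNorm_eq_norm {n : ℕ} (M : Matrix (Fin n) (Fin n) ℝ) : frobNorm M = ‖M‖ := by
  rw [frobNorm, frobenius_norm_def, ← Real.sqrt_eq_rpow, Finset.sum_comm]
  simp [Matrix.trace, Matrix.mul_apply, sq]

theorem frobNorm_transpose {n : ℕ} (M : Matrix (Fin n) (Fin n) ℝ) :
    frobNorm Mᵀ = frobNorm M := by
  rw [frobNorm_eq_norm, frobNorm_eq_norm, frobenius_norm_transpose]

theorem exists_frobNorm_smul_eq_one {n : ℕ} {M : Matrix (Fin n) (Fin n) ℝ} (hM : M ≠ 0) :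
    ∃ c : ℝ, frobNorm (c • M) = 1 :=
  ⟨‖M‖⁻¹, (frobNorm_eq_norm _).trans (norm_smul_inv_norm hM)⟩

theorem abs_iInf_trace_add_smul_sub_le {ι : Type*} [Nonempty ι] {n : ℕ}
    (U V : ι → Matrix (Fin n) (Fin n) ℝ) (hU : ∀ i, frobNorm (U i) = 1)
    (hV : ∀ i, frobNorm (V i) = 1) (A Abar B : Matrix (Fin n) (Fin n) ℝ) {μ : ℝ}
    (hμ : 0 ≤ μ) :
    |(⨅ i, ((A + μ • Abar) * U i * B * V i).trace) - μ * ⨅ i, (Abar * U i * B * V i).trace|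
      ≤ n * (‖A‖ * ‖B‖) := by
  have hbound (X : Matrix (Fin n) (Fin n) ℝ) (i : ι) :
      |(X * U i * B * V i).trace| ≤ n * (‖X‖ * ‖B‖) := by
    simpa using frobenius_norm_trace_mul_mul_mul_le X (U i) B (V i)
      ((frobNorm_eq_norm _).symm.trans (hU i)).le ((frobNorm_eq_norm _).symm.trans (hV i)).le
  simp only [add_mul, smul_mul, trace_add, trace_smul, smul_eq_mul]
  refine abs_iInf_add_mul_sub_mul_iInf_le (hbound A) ⟨-(n * (‖Abar‖ * ‖B‖)), ?_⟩ hμ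
  rintro _ ⟨i, rfl⟩
  exact (abs_le.mp (hbound Abar i)).1

end Frobenius

def symUnitSphere (n : ℕ) : Set (Matrix (Fin n) (Fin n) ℝ) :=
  {U | Uᵀ = U ∧ frobNorm U = 1}

def skewUnitSphere (n : ℕ) : Set (Matrix (Fin n) (Fin n) ℝ) :=
  {W | Wᵀ = -W ∧ frobNorm W = 1}

theorem symUnitSphere_nonempty {n : ℕ} [NeZero n] : (symUnitSphere n).Nonempty := by
  obtain ⟨c, hc⟩ :=
    exists_frobNorm_smul_eq_one (one_ne_zero : (1 : Matrix (Fin n) (Fin n) ℝ) ≠ 0)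
  exact ⟨c • 1, by rw [transpose_smul, transpose_one], hc⟩

theorem skewUnitSphere_nonempty {n : ℕ} (hn : 2 ≤ n) : (skewUnitSphere n).Nonempty := by
  let i : Fin n := ⟨0, by omega⟩
  let j : Fin n := ⟨1, by omega⟩
  have hij : i ≠ j := by simp [i, j, Fin.ext_iff]
  set M : Matrix (Fin n) (Fin n) ℝ := single i j 1 - single j i 1
  have hM : M ≠ 0 := fun h => by
    simpa [M, single_apply_of_ne, hij, hij.symm] using congrFun (congrFun h i) j
  obtain ⟨c, hc⟩ := exists_frobNorm_smul_eq_one hM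
  refine ⟨c • M, ?_, hc⟩
  rw [transpose_smul, transpose_sub, transpose_single, transpose_single, ← neg_sub, smul_neg]

theorem sInf_Eset {n : ℕ} (A B : Matrix (Fin n) (Fin n) ℝ) :
    sInf (Eset A B) = ⨅ U : symUnitSphere n, (A * U * B * U).trace := by
  congr 1
  ext t
  simp [Eset, symUnitSphere, eq_comm, and_assoc]

theorem sInf_Oset {n : ℕ} (A B : Matrix (Fin n) (Fin n) ℝ) :
    sInf (Oset A B) =
      ⨅ W : skewUnitSphere n, (A * W * B * (W : Matrix (Fin n) (Fin n) ℝ)ᵀ).trace := by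
  congr 1
  ext t
  simp [Oset, skewUnitSphere, eq_comm, and_assoc]

theorem exists_abs_sInf_Eset_add_smul_sub_le {n : ℕ} [NeZero n]
    (A Abar B : Matrix (Fin n) (Fin n) ℝ) :
    ∃ C, ∀ μ : ℝ, 0 ≤ μ → |sInf (Eset (A + μ • Abar) B) - μ * sInf (Eset Abar B)| ≤ C := by
  have := (symUnitSphere_nonempty (n := n)).to_subtype
  simp only [sInf_Eset]
  exact ⟨_, fun μ hμ => abs_iInf_trace_add_smul_sub_le (fun U : symUnitSphere n => U.1)
    (fun U => U.1) (fun U => U.2.2) (fun U => U.2.2) A Abar B hμ⟩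

theorem exists_abs_sInf_Oset_add_smul_sub_le {n : ℕ} (hn : 2 ≤ n)
    (A Abar B : Matrix (Fin n) (Fin n) ℝ) :
    ∃ C, ∀ μ : ℝ, 0 ≤ μ → |sInf (Oset (A + μ • Abar) B) - μ * sInf (Oset Abar B)| ≤ C := by
  have := (skewUnitSphere_nonempty hn).to_subtype
  simp only [sInf_Oset]
  exact ⟨_, fun μ hμ => abs_iInf_trace_add_smul_sub_le (fun W : skewUnitSphere n => W.1)
    (fun W => W.1ᵀ) (fun W => W.2.2) (fun W => (frobNorm_transpose _).trans W.2.2)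
    A Abar B hμ⟩

theorem stmt_16_general (n : ℕ) (hn : 2 ≤ n) (Abar Bbar : Matrix (Fin n) (Fin n) ℝ)
    (hfail : sInf (Oset Abar Bbar) < sInf (Eset Abar Bbar))
    (A : Matrix (Fin n) (Fin n) ℝ) :
    ∃ μ₀ : ℝ, 0 < μ₀ ∧ ∀ μ : ℝ, μ₀ ≤ μ →
      sInf (Oset (A + μ • Abar) Bbar) < sInf (Eset (A + μ • Abar) Bbar) := by
  have : NeZero n := ⟨by omega⟩
  obtain ⟨CE, hE⟩ := exists_abs_sInf_Eset_add_smul_sub_le A Abar Bbar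
  obtain ⟨CO, hO⟩ := exists_abs_sInf_Oset_add_smul_sub_le hn A Abar Bbar
  have hCE : 0 ≤ CE := (abs_nonneg _).trans (hE 0 le_rfl)
  have hCO : 0 ≤ CO := (abs_nonneg _).trans (hO 0 le_rfl)
  set gap := sInf (Eset Abar Bbar) - sInf (Oset Abar Bbar)
  have hgap : 0 < gap := sub_pos.mpr hfail
  refine ⟨(CE + CO + 1) / gap, by positivity, fun μ hμ => ?_⟩
  have hμgap : CE + CO + 1 ≤ μ * gap := (div_le_iff₀ hgap).mp hμ
  have hμ0 : 0 ≤ μ := (div_pos (by positivity) hgap).le.trans hμ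
  have hEμ := (abs_le.mp (hE μ hμ0)).1
  have hOμ := (abs_le.mp (hO μ hμ0)).2
  have : μ * gap = μ * sInf (Eset Abar Bbar) - μ * sInf (Oset Abar Bbar) := mul_sub _ _ _
  linarith

theorem stmt_16 (n : ℕ) (hn : 2 ≤ n) (Abar Bbar : Matrix (Fin n) (Fin n) ℝ)
    (hAbar : Abarᵀ = Abar) (hBbar : Bbarᵀ = Bbar)
    (hfail : sInf (Oset Abar Bbar) < sInf (Eset Abar Bbar))
    (A : Matrix (Fin n) (Fin n) ℝ) (hA : Aᵀ = A) :
    ∃ μ₀ : ℝ, 0 < μ₀ ∧ ∀ μ : ℝ, μ₀ ≤ μ →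
      sInf (Oset (A + μ • Abar) Bbar) < sInf (Eset (A + μ • Abar) Bbar) :=
  stmt_16_general n hn Abar Bbar hfail A
end
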